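/- Let q = 2^ℓ and n̄ odd coprime to q. The factorization of x^{n̄} − 1 over F_{q²} contains at least one pair {h, h†} of distinct conjugate-reciprocal monic irreducible factors if and only if q^{2k+1} ≢ -1 (mod n̄) for all nonnegative integers k. -/

import Mathlib

open Polynomial

/-- The reciprocal polynomial `f*(x) = f(0)⁻¹ · x^(deg f) · f(1/x)`. -/
noncomputable def recip {F : Type*} [Field F] (f : Polynomial F) : Polynomial F :=
  Polynomial.C (f.coeff 0)⁻¹ * f.reverse

/-- The conjugate-reciprocal polynomial `f†`: apply the involution `c ↦ c^e`
coefficientwise to the reciprocal polynomial `f*`. -/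
noncomputable def dagPoly {F : Type*} [Field F] (e : ℕ) (f : Polynomial F) : Polynomial F :=
  (recip f).sum fun i c => Polynomial.C (c ^ e) * Polynomial.X ^ i

section Aux

variable {F : Type*} [Field F]

lemma dagPoly_eq_map (ℓ : ℕ) [ExpChar F 2] (f : Polynomial F) :
    dagPoly (2 ^ ℓ) f = (recip f).map (iterateFrobenius F 2 ℓ) := by
  rw [dagPoly, show (recip f).map (iterateFrobenius F 2 ℓ)
      = eval₂ (C.comp (iterateFrobenius F 2 ℓ)) X (recip f) from rfl, eval₂_eq_sum]
  rfl

lemma coeff_zero_ne_zero_of_dvd {n : ℕ} (hn : n ≠ 0) {h : Polynomial F}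
    (hdvd : h ∣ X ^ n - 1) : h.coeff 0 ≠ 0 := by
  obtain ⟨g, hg⟩ := hdvd
  intro h0
  have h1 : (X ^ n - 1 : F[X]).coeff 0 = 0 := by
    rw [hg, mul_coeff_zero, h0, zero_mul]
  rw [coeff_sub, coeff_X_pow, if_neg (Ne.symm hn), coeff_one, if_pos rfl, zero_sub,
    neg_eq_zero] at h1
  exact one_ne_zero h1

lemma trailingCoeff_eq_coeff_zero {f : Polynomial F} (h0 : f.coeff 0 ≠ 0) :
    f.trailingCoeff = f.coeff 0 := by
  rw [trailingCoeff, natTrailingDegree_eq_zero.mpr (Or.inr h0)]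

lemma recip_monic {f : Polynomial F} (hm : f.Monic) (h0 : f.coeff 0 ≠ 0) :
    (recip f).Monic := by
  show (recip f).leadingCoeff = 1
  rw [recip, leadingCoeff_mul, leadingCoeff_C, reverse_leadingCoeff,
    _root_.trailingCoeff_eq_coeff_zero h0, inv_mul_cancel₀ h0]

lemma recip_natDegree {f : Polynomial F} (h0 : f.coeff 0 ≠ 0) :
    (recip f).natDegree = f.natDegree := by
  rw [recip, natDegree_C_mul (inv_ne_zero h0), reverse_natDegree,
    natTrailingDegree_eq_zero.mpr (Or.inr h0), Nat.sub_zero]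

lemma reverse_X_pow_sub_one (n : ℕ) [CharP F 2] :
    (X ^ n - 1 : F[X]).reverse = X ^ n - 1 := by
  have hx : (X ^ n : F[X]).reverse = 1 := by
    rw [← one_mul (X ^ n : F[X]), reverse_mul_X_pow, ← C_1, reverse_C]
  calc (X ^ n - 1 : F[X]).reverse = (X ^ n + C 1 : F[X]).reverse := by
        rw [CharTwo.sub_eq_add, C_1]
    _ = (X ^ n : F[X]).reverse + C 1 * X ^ (X ^ n : F[X]).natDegree := reverse_add_C _ _
    _ = 1 + X ^ n := by rw [hx, natDegree_X_pow, C_1, one_mul]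
    _ = X ^ n - 1 := by rw [CharTwo.sub_eq_add, add_comm]

lemma recip_dvd [CharP F 2] {n : ℕ} (hn : n ≠ 0) {f : Polynomial F}
    (hdvd : f ∣ X ^ n - 1) : recip f ∣ X ^ n - 1 := by
  obtain ⟨g, hg⟩ := hdvd
  have hco : f.coeff 0 * g.coeff 0 = 1 := by
    have h1 : (X ^ n - 1 : F[X]).coeff 0 = 1 := by
      rw [coeff_sub, coeff_X_pow, if_neg (Ne.symm hn), coeff_one, if_pos rfl, zero_sub,
        CharTwo.neg_eq]
    rw [hg, mul_coeff_zero] at h1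
    exact h1
  have hf0 : f.coeff 0 ≠ 0 := left_ne_zero_of_mul_eq_one hco
  have hg0 : g.coeff 0 ≠ 0 := right_ne_zero_of_mul_eq_one hco
  refine ⟨recip g, ?_⟩
  have hrev : f.reverse * g.reverse = X ^ n - 1 := by
    rw [← reverse_mul_of_domain, ← hg, reverse_X_pow_sub_one]
  rw [recip, recip]
  calc (X ^ n - 1 : F[X]) = C 1 * (X ^ n - 1) := by rw [C_1, one_mul]
    _ = C ((f.coeff 0 * g.coeff 0)⁻¹) * (f.reverse * g.reverse) := by rw [hco, hrev, inv_one]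
    _ = C (f.coeff 0)⁻¹ * f.reverse * (C (g.coeff 0)⁻¹ * g.reverse) := by
        rw [mul_inv, C_mul]; ring

lemma dagPoly_monic (ℓ : ℕ) [ExpChar F 2] {f : Polynomial F} (hm : f.Monic)
    (h0 : f.coeff 0 ≠ 0) : (dagPoly (2 ^ ℓ) f).Monic := by
  rw [dagPoly_eq_map]
  exact (recip_monic hm h0).map _

lemma dagPoly_natDegree (ℓ : ℕ) [ExpChar F 2] {f : Polynomial F} (h0 : f.coeff 0 ≠ 0) :
    (dagPoly (2 ^ ℓ) f).natDegree = f.natDegree := by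
  rw [dagPoly_eq_map, natDegree_map, recip_natDegree h0]

lemma dagPoly_dvd (ℓ : ℕ) [CharP F 2] [ExpChar F 2] {n : ℕ} (hn : n ≠ 0) {f : Polynomial F}
    (hdvd : f ∣ X ^ n - 1) : dagPoly (2 ^ ℓ) f ∣ X ^ n - 1 := by
  rw [dagPoly_eq_map]
  have h2 : (recip f).map (iterateFrobenius F 2 ℓ) ∣
      (X ^ n - 1 : F[X]).map (iterateFrobenius F 2 ℓ) :=
    Polynomial.map_dvd _ (recip_dvd hn hdvd)
  simpa using h2

lemma dagPoly_root {K : Type*} [Field K] [Algebra F K] (ℓ : ℕ) [ExpChar F 2] [ExpChar K 2]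
    (f : Polynomial F) {α : K} (hα : α ≠ 0) (hroot : aeval α f = 0) :
    aeval (α⁻¹ ^ 2 ^ ℓ) (dagPoly (2 ^ ℓ) f) = 0 := by
  set σ := iterateFrobenius F 2 ℓ with hσ
  set τ := iterateFrobenius K 2 ℓ with hτ
  have hcomp : ((algebraMap F K).comp σ) = τ.comp (algebraMap F K) := by
    ext c
    simp [hσ, hτ, iterateFrobenius_def, map_pow]
  have hτα : τ α ≠ 0 := by
    rw [hτ, iterateFrobenius_def]
    exact pow_ne_zero _ hα
  haveI : Invertible (τ α) := invertibleOfNonzero hτα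
  have hx : α⁻¹ ^ 2 ^ ℓ = ⅟ (τ α) := by
    rw [invOf_eq_inv, hτ, iterateFrobenius_def, inv_pow]
  rw [dagPoly_eq_map, aeval_def, eval₂_map, recip, eval₂_mul, hcomp]
  suffices hrev : eval₂ (τ.comp (algebraMap F K)) (α⁻¹ ^ 2 ^ ℓ) f.reverse = 0 by
    rw [hrev, mul_zero]
  rw [hx, eval₂_reverse_eq_zero_iff, ← hom_eval₂, ← aeval_def, hroot, map_zero]

lemma aeval_pow_root {K : Type*} [Field K] [Algebra F K] [Fintype F] [ExpChar K 2]
    {m : ℕ} (hcard : Fintype.card F = 2 ^ m) (f : Polynomial F) {α : K}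
    (hroot : aeval α f = 0) (j : ℕ) : aeval (α ^ (2 ^ m) ^ j) f = 0 := by
  induction j with
  | zero => simpa using hroot
  | succ j ih =>
    set τ := iterateFrobenius K 2 m with hτ
    have hcomp : τ.comp (algebraMap F K) = algebraMap F K := by
      ext c
      rw [RingHom.comp_apply, hτ, iterateFrobenius_def, ← map_pow, ← hcard,
        FiniteField.pow_card]
    have key : aeval ((α ^ (2 ^ m) ^ j) ^ 2 ^ m) f = 0 := by
      have h2 := hom_eval₂ f (algebraMap F K) τ (α ^ (2 ^ m) ^ j)
      rw [hcomp] at h2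
      rw [aeval_def] at ih ⊢
      rw [show τ (α ^ (2 ^ m) ^ j) = (α ^ (2 ^ m) ^ j) ^ 2 ^ m from by
        rw [hτ, iterateFrobenius_def]] at h2
      rw [← h2, ih, map_zero]
    rw [← pow_mul, ← pow_succ] at key
    exact key

lemma algEquiv_exists_pow {F K : Type*} [Field F] [Fintype F] [Field K] [Finite K]
    [Algebra F K] (φ : K ≃ₐ[F] K) :
    ∃ j : ℕ, ∀ x : K, φ x = x ^ (Fintype.card F) ^ j := by
  classical
  haveI : Fintype K := Fintype.ofFinite K
  obtain ⟨p, hp⟩ := CharP.exists F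
  haveI := hp
  obtain ⟨s, hprime, hcardF⟩ := FiniteField.card F p
  haveI : Fact p.Prime := ⟨hprime⟩
  haveI : CharP K p := charP_of_injective_algebraMap (algebraMap F K).injective p
  set Q := Fintype.card F with hQ
  set d := Module.finrank F K with hd
  have hd0 : 0 < d := Module.finrank_pos
  have hcardK : Fintype.card K = Q ^ d := Module.card_eq_pow_finrank
  have hQ1 : 1 < Q := Fintype.one_lt_card
  have hcomm : ∀ c : F, (iterateFrobenius K p s) (algebraMap F K c) = algebraMap F K c := by
    intro c
    rw [iterateFrobenius_def, ← map_pow, ← hcardF, FiniteField.pow_card]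
  let τA : K →ₐ[F] K := { (iterateFrobenius K p s : K →+* K) with commutes' := hcomm }
  let τ : K ≃ₐ[F] K := AlgEquiv.ofBijective τA
    (Finite.injective_iff_bijective.mp (iterateFrobenius K p s).injective)
  have hτ : ∀ x : K, τ x = x ^ Q := by
    intro x
    show iterateFrobenius K p s x = x ^ Q
    rw [iterateFrobenius_def, hcardF]
  have hτpow : ∀ (m : ℕ) (x : K), (τ ^ m) x = x ^ Q ^ m := by
    intro m
    induction m with
    | zero => intro x; simp
    | succ m ih =>
      intro x
      rw [pow_succ, AlgEquiv.mul_apply, ih (τ x), hτ x, ← pow_mul, ← pow_succ']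
  have hτd : τ ^ d = 1 := by
    apply AlgEquiv.ext
    intro x
    rw [hτpow, ← hcardK]
    simpa using FiniteField.pow_card x
  have hne : ∀ m, 0 < m → m < d → τ ^ m ≠ 1 := by
    intro m hm0 hmd heq
    have hall : ∀ x : K, x ^ Q ^ m = x := by
      intro x
      rw [← hτpow m x, heq, AlgEquiv.one_apply]
    have h1 : 1 < Q ^ m := Nat.one_lt_pow hm0.ne' hQ1
    have hne0 : (X ^ Q ^ m - X : K[X]) ≠ 0 := FiniteField.X_pow_card_sub_X_ne_zero K h1
    have hsubset : (Finset.univ : Finset K) ⊆ (X ^ Q ^ m - X : K[X]).roots.toFinset := by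
      intro x _
      rw [Multiset.mem_toFinset, mem_roots hne0]
      simp [IsRoot, hall x]
    have hsub : Fintype.card K ≤ Q ^ m := by
      calc Fintype.card K = (Finset.univ : Finset K).card := (Finset.card_univ).symm
        _ ≤ (X ^ Q ^ m - X : K[X]).roots.toFinset.card := Finset.card_le_card hsubset
        _ ≤ Multiset.card (X ^ Q ^ m - X : K[X]).roots := Multiset.toFinset_card_le _
        _ ≤ (X ^ Q ^ m - X : K[X]).natDegree := card_roots' _
        _ = Q ^ m := FiniteField.X_pow_card_sub_X_natDegree_eq K h1
    rw [hcardK] at hsub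
    exact absurd hsub (not_le.mpr (Nat.pow_lt_pow_right hQ1 hmd))
  have horder : orderOf τ = d :=
    (orderOf_eq_iff hd0).mpr ⟨hτd, fun m hmd hm0 => hne m hm0 hmd⟩
  have hcardG : Nat.card (K ≃ₐ[F] K) = d := by
    rw [IsGalois.card_aut_eq_finrank]
  have htop : Subgroup.zpowers τ = ⊤ :=
    Subgroup.eq_top_of_card_eq _ (by rw [Nat.card_zpowers, horder, hcardG])
  have hmem : φ ∈ Subgroup.zpowers τ := htop ▸ Subgroup.mem_top φ
  rw [← mem_powers_iff_mem_zpowers] at hmem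
  obtain ⟨j, hj⟩ := hmem
  refine ⟨j, fun x => ?_⟩
  rw [← hj, hτpow]

lemma exists_conj_pow {F K : Type*} [Field F] [Fintype F] [Field K] [Finite K] [Algebra F K]
    {α β : K} (hroot : aeval β (minpoly F α) = 0) :
    ∃ j : ℕ, β = α ^ (Fintype.card F) ^ j := by
  haveI : Fintype K := Fintype.ofFinite K
  have halg : IsAlgebraic F α := (IsIntegral.of_finite F α).isAlgebraic
  obtain ⟨φ, hφ⟩ := minpoly.exists_algEquiv_of_root' halg hroot
  obtain ⟨j, hj⟩ := algEquiv_exists_pow φ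
  exact ⟨j, by rw [← hφ, hj]⟩

end Aux

/-- For odd `n̄` and `F = F_{q²}` with `q = 2^ℓ` coprime to `n̄`: the factorization of
`x^n̄ - 1` over `F` contains a pair `{h, h†}` of distinct conjugate-reciprocal monic
irreducible factors iff `q^{2k+1} ≢ -1 (mod n̄)` for all nonnegative `k`. -/
theorem stmt_17 {F : Type*} [Field F] [Fintype F] (n ℓ : ℕ) (hn : Odd n) (hℓ : 1 ≤ ℓ)
    (hcard : Fintype.card F = 2 ^ (2 * ℓ))
    (hcop : Nat.Coprime (2 ^ ℓ) n) :
    (∃ h : Polynomial F, h.Monic ∧ Irreducible h ∧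
        h ∣ Polynomial.X ^ n - 1 ∧ dagPoly (2 ^ ℓ) h ∣ Polynomial.X ^ n - 1 ∧
        dagPoly (2 ^ ℓ) h ≠ h) ↔
      ∀ k : ℕ, (2 : ZMod n) ^ (ℓ * (2 * k + 1)) ≠ -1 := by
  have hn0 : n ≠ 0 := by
    rintro rfl
    simp [Nat.odd_iff] at hn
  haveI : NeZero n := ⟨hn0⟩
  -- characteristic 2
  obtain ⟨p, hp⟩ := CharP.exists F
  haveI := hp
  obtain ⟨s, hprime, hcards⟩ := FiniteField.card F p
  have hp2 : p = 2 := by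
    have h1 : p ∣ Fintype.card F := by
      rw [hcards]
      exact dvd_pow_self p s.ne_zero
    rw [hcard] at h1
    exact (Nat.prime_dvd_prime_iff_eq hprime Nat.prime_two).mp (hprime.dvd_of_dvd_pow h1)
  subst hp2
  haveI : Fact (Nat.Prime 2) := ⟨Nat.prime_two⟩
  haveI : ExpChar F 2 := .prime Nat.prime_two
  have hnF : ((n : ℕ) : F) ≠ 0 := by
    rw [Ne, CharP.cast_eq_zero_iff F 2]
    rw [Nat.odd_iff] at hn
    omega
  set N : ℕ+ := ⟨n, Nat.pos_of_ne_zero hn0⟩ with hN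
  set K := CyclotomicField N F with hK
  haveI : NeZero ((N : ℕ) : F) := ⟨hnF⟩
  haveI : IsCyclotomicExtension {(N : ℕ)} F K := CyclotomicField.isCyclotomicExtension N F
  haveI : Module.Finite F K := IsCyclotomicExtension.finite_of_singleton N F K
  haveI : Finite K := Module.finite_of_finite F
  haveI : CharP K 2 := charP_of_injective_algebraMap (algebraMap F K).injective 2
  haveI : ExpChar K 2 := .prime Nat.prime_two
  obtain ⟨ζ, hζ⟩ := ((IsCyclotomicExtension.iff_singleton (N : ℕ) F K).1 inferInstance).1
  have hζn : IsPrimitiveRoot ζ n := hζ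
  have hζ0 : ζ ≠ 0 := hζn.ne_zero hn0
  constructor
  · rintro ⟨h, hmonic, hirr, hdvd, hdagdvd, hne⟩ k hk
    apply hne
    have hco : h.coeff 0 ≠ 0 := coeff_zero_ne_zero_of_dvd hn0 hdvd
    -- find a root of h in K
    have hsplits : Splits ((X ^ n - 1 : F[X]).map (algebraMap F K)) :=
      IsCyclotomicExtension.splits_X_pow_sub_one (n := N) (S := {(N : ℕ)}) (K := F) (L := K) (Set.mem_singleton (N : ℕ))
    have hXn0 : (X ^ n - 1 : F[X]) ≠ 0 := by
      have : (X ^ n - 1 : F[X]).coeff 0 ≠ 0 := by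
        rw [coeff_sub, coeff_X_pow, if_neg (Ne.symm hn0), coeff_one, if_pos rfl, zero_sub,
          neg_ne_zero]
        exact one_ne_zero
      exact fun hz => this (by rw [hz, coeff_zero])
    have hhsplits := hsplits.of_dvd (Polynomial.map_ne_zero hXn0) (Polynomial.map_dvd _ hdvd)
    have hdeg : h.degree ≠ 0 := (degree_pos_of_irreducible hirr).ne'
    obtain ⟨α, hα⟩ := hhsplits.exists_eval_eq_zero (by rwa [degree_map])
    rw [eval_map] at hα
    have hαroot : aeval α h = 0 := by rw [aeval_def]; exact hα
    have hα0 : α ≠ 0 := by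
      rintro rfl
      rw [eval₂_at_zero] at hα
      exact hco ((algebraMap F K).injective (by rw [hα, map_zero]))
    have hαn : α ^ n = 1 := by
      obtain ⟨g, hg⟩ := hdvd
      have h2 : aeval α (X ^ n - 1 : F[X]) = 0 := by
        rw [hg, map_mul, hαroot, zero_mul]
      rw [map_sub, map_pow, aeval_X, map_one, sub_eq_zero] at h2
      exact h2
    have hh : h = minpoly F α := minpoly.eq_of_irreducible_of_monic hirr hαroot hmonic
    -- use hk to show the conjugate-reciprocal root is a Frobenius conjugate
    have hdvd_n : n ∣ 2 ^ (ℓ * (2 * k + 1)) + 1 := by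
      rw [← ZMod.natCast_eq_zero_iff]
      push_cast
      rw [hk]
      ring
    have hαpow : α ^ 2 ^ (ℓ * (2 * k + 1)) = α⁻¹ := by
      obtain ⟨t, ht⟩ := hdvd_n
      have h1 : α ^ (2 ^ (ℓ * (2 * k + 1)) + 1) = 1 := by
        rw [ht, pow_mul, hαn, one_pow]
      rw [pow_succ] at h1
      exact eq_inv_of_mul_eq_one_left h1
    have hkey : α⁻¹ ^ 2 ^ ℓ = α ^ (2 ^ (2 * ℓ)) ^ (k + 1) := by
      rw [← hαpow, ← pow_mul, ← pow_add, ← pow_mul]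
      congr 1
      ring
    have hroot2 : aeval (α⁻¹ ^ 2 ^ ℓ) h = 0 := by
      rw [hkey]
      exact aeval_pow_root hcard h hαroot (k + 1)
    have hdagroot : aeval (α⁻¹ ^ 2 ^ ℓ) (dagPoly (2 ^ ℓ) h) = 0 :=
      dagPoly_root ℓ h hα0 hαroot
    have hmin : minpoly F (α⁻¹ ^ 2 ^ ℓ) = h :=
      (minpoly.eq_of_irreducible_of_monic hirr hroot2 hmonic).symm
    have hdvd2 : h ∣ dagPoly (2 ^ ℓ) h := by
      have h5 := minpoly.dvd F (α⁻¹ ^ 2 ^ ℓ) hdagroot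
      rwa [hmin] at h5
    exact (eq_of_dvd_of_natDegree_le_of_leadingCoeff hdvd2
      (le_of_eq (dagPoly_natDegree ℓ hco))
      (by rw [hmonic.leadingCoeff, (dagPoly_monic ℓ hmonic hco).leadingCoeff])).symm
  · intro hall
    have hint : IsIntegral F ζ := IsIntegral.of_finite F ζ
    have hdvdζ : minpoly F ζ ∣ X ^ n - 1 :=
      minpoly.dvd F ζ (by rw [map_sub, map_pow, aeval_X, map_one, hζn.pow_eq_one, sub_self])
    refine ⟨minpoly F ζ, minpoly.monic hint, minpoly.irreducible hint, hdvdζ,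
      dagPoly_dvd ℓ hn0 hdvdζ, ?_⟩
    intro heq
    have hroot : aeval (ζ⁻¹ ^ 2 ^ ℓ) (minpoly F ζ) = 0 := by
      rw [← heq]
      exact dagPoly_root ℓ _ hζ0 (minpoly.aeval F ζ)
    obtain ⟨j, hj⟩ := exists_conj_pow hroot
    rw [hcard] at hj
    have hone : ζ ^ ((2 ^ (2 * ℓ)) ^ j + 2 ^ ℓ) = 1 := by
      rw [pow_add, ← hj, ← mul_pow, inv_mul_cancel₀ hζ0, one_pow]
    have hdvdn : n ∣ (2 ^ (2 * ℓ)) ^ j + 2 ^ ℓ := (hζn.pow_eq_one_iff_dvd _).mp hone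
    have hz : (2 : ZMod n) ^ (2 * ℓ * j) + (2 : ZMod n) ^ ℓ = 0 := by
      have h2 := (ZMod.natCast_eq_zero_iff _ n).mpr hdvdn
      push_cast at h2
      rw [← pow_mul] at h2
      exact h2
    cases j with
    | zero =>
      apply hall 0
      have h3 : (2 : ZMod n) ^ ℓ = -1 := by
        rw [Nat.mul_zero, pow_zero] at hz
        linear_combination hz
      simpa using h3
    | succ m =>
      apply hall m
      have hexp : 2 * ℓ * (m + 1) = ℓ + ℓ * (2 * m + 1) := by ring
      rw [hexp, pow_add] at hz
      have hfact : (2 : ZMod n) ^ ℓ * ((2 : ZMod n) ^ (ℓ * (2 * m + 1)) + 1) = 0 := by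
        linear_combination hz
      have hunit : IsUnit ((2 : ZMod n) ^ ℓ) := by
        have := (ZMod.unitOfCoprime (2 ^ ℓ) hcop).isUnit
        rwa [ZMod.coe_unitOfCoprime, Nat.cast_pow, Nat.cast_ofNat] at this
      have h4 : (2 : ZMod n) ^ (ℓ * (2 * m + 1)) + 1 = 0 :=
        (hunit.mul_right_eq_zero).mp hfact
      linear_combination h4
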